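/- arXiv:1501.00229 — 5 statements merged into one kernel-verified Lean document; each statement's English description precedes it below -/
import Mathlib

section
/- If (A, μ, α) is an involutive Hom-Novikov superalgebra (i.e., α² = id), then A with the new product x * y = α(μ(x,y)) is a Novikov superalgebra. -/
/-- The twisted product `x * y = α (x y)`. -/
def amul {𝕜 A : Type*} [Field 𝕜] [AddCommGroup A] [Module 𝕜 A]
    (α : A →ₗ[𝕜] A) (mul : A →ₗ[𝕜] A →ₗ[𝕜] A) (x y : A) : A :=
  α (mul x y)

theorem stmt0
    (𝕜 A : Type*) [Field 𝕜] [AddCommGroup A] [Module 𝕜 A]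
    (G : ZMod 2 → Submodule 𝕜 A) (hG : DirectSum.IsInternal G)
    (mul : A →ₗ[𝕜] A →ₗ[𝕜] A) (α : A →ₗ[𝕜] A)
    (hmul_even : ∀ i j : ZMod 2, ∀ x ∈ G i, ∀ y ∈ G j, mul x y ∈ G (i + j))
    (hα_even : ∀ i : ZMod 2, ∀ x ∈ G i, α x ∈ G i)
    (hα_mul : ∀ x y : A, α (mul x y) = mul (α x) (α y))
    (hls : ∀ i j k : ZMod 2, ∀ x ∈ G i, ∀ y ∈ G j, ∀ z ∈ G k,
      mul (mul x y) (α z) - mul (α x) (mul y z)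
        = ((-1 : 𝕜) ^ (i.val * j.val)) • (mul (mul y x) (α z) - mul (α y) (mul x z)))
    (hrn : ∀ i j k : ZMod 2, ∀ x ∈ G i, ∀ y ∈ G j, ∀ z ∈ G k,
      mul (mul x y) (α z) = ((-1 : 𝕜) ^ (j.val * k.val)) • mul (mul x z) (α y))
    (hinv : ∀ x : A, α (α x) = x) :
    (∀ i j : ZMod 2, ∀ x ∈ G i, ∀ y ∈ G j, amul α mul x y ∈ G (i + j)) ∧
    (∀ i j k : ZMod 2, ∀ x ∈ G i, ∀ y ∈ G j, ∀ z ∈ G k,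
      amul α mul (amul α mul x y) z - amul α mul x (amul α mul y z)
        = ((-1 : 𝕜) ^ (i.val * j.val)) •
            (amul α mul (amul α mul y x) z - amul α mul y (amul α mul x z))) ∧
    (∀ i j k : ZMod 2, ∀ x ∈ G i, ∀ y ∈ G j, ∀ z ∈ G k,
      amul α mul (amul α mul x y) z
        = ((-1 : 𝕜) ^ (j.val * k.val)) • amul α mul (amul α mul x z) y) := by
  have key1 : ∀ x y z : A, amul α mul (amul α mul x y) z = mul (mul x y) (α z) := by
    intro x y z
    simp only [amul, hα_mul, hinv]
  have key2 : ∀ x y z : A, amul α mul x (amul α mul y z) = mul (α x) (mul y z) := by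
    intro x y z
    simp only [amul, hα_mul, hinv]
  refine ⟨?_, ?_, ?_⟩
  · intro i j x hx y hy
    exact hα_even _ _ (hmul_even i j x hx y hy)
  · intro i j k x hx y hy z hz
    rw [key1, key2, key1, key2]
    exact hls i j k x hx y hy z hz
  · intro i j k x hx y hy z hz
    rw [key1, key1]
    exact hrn i j k x hx y hy z hz
end

section
/- If (A, μ, α) is a Hom-Novikov superalgebra, then (A, α∘μ, α²) is again a Hom-Novikov superalgebra; that is, the product x * y = α(xy) with twisting map α² satisfies the Hom-Novikov superalgebra axioms. -/
theorem stmt2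
    (𝕜 A : Type*) [Field 𝕜] [AddCommGroup A] [Module 𝕜 A]
    (G : ZMod 2 → Submodule 𝕜 A) (hG : DirectSum.IsInternal G)
    (mul : A →ₗ[𝕜] A →ₗ[𝕜] A) (α : A →ₗ[𝕜] A)
    (hmul_even : ∀ i j : ZMod 2, ∀ x ∈ G i, ∀ y ∈ G j, mul x y ∈ G (i + j))
    (hα_even : ∀ i : ZMod 2, ∀ x ∈ G i, α x ∈ G i)
    (hα_mul : ∀ x y : A, α (mul x y) = mul (α x) (α y))
    (hls : ∀ i j k : ZMod 2, ∀ x ∈ G i, ∀ y ∈ G j, ∀ z ∈ G k,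
      mul (mul x y) (α z) - mul (α x) (mul y z)
        = ((-1 : 𝕜) ^ (i.val * j.val)) • (mul (mul y x) (α z) - mul (α y) (mul x z)))
    (hrn : ∀ i j k : ZMod 2, ∀ x ∈ G i, ∀ y ∈ G j, ∀ z ∈ G k,
      mul (mul x y) (α z) = ((-1 : 𝕜) ^ (j.val * k.val)) • mul (mul x z) (α y)) :
    (∀ i j : ZMod 2, ∀ x ∈ G i, ∀ y ∈ G j, amul α mul x y ∈ G (i + j)) ∧
    (∀ x y : A, α (α (amul α mul x y)) = amul α mul (α (α x)) (α (α y))) ∧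
    (∀ i j k : ZMod 2, ∀ x ∈ G i, ∀ y ∈ G j, ∀ z ∈ G k,
      amul α mul (amul α mul x y) (α (α z)) - amul α mul (α (α x)) (amul α mul y z)
        = ((-1 : 𝕜) ^ (i.val * j.val)) •
            (amul α mul (amul α mul y x) (α (α z))
              - amul α mul (α (α y)) (amul α mul x z))) ∧
    (∀ i j k : ZMod 2, ∀ x ∈ G i, ∀ y ∈ G j, ∀ z ∈ G k,
      amul α mul (amul α mul x y) (α (α z))
        = ((-1 : 𝕜) ^ (j.val * k.val)) • amul α mul (amul α mul x z) (α (α y))) := by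
  refine ⟨fun i j x hx y hy => hα_even _ _ (hmul_even i j x hx y hy),
    fun x y => by simp only [amul, hα_mul], ?_, ?_⟩
  · intro i j k x hx y hy z hz
    simp only [amul, ← hα_mul, ← map_sub, ← map_smul]
    exact congrArg α (congrArg α (hls i j k x hx y hy z hz))
  · intro i j k x hx y hy z hz
    simp only [amul, ← hα_mul]
    rw [hrn i j k x hx y hy z hz, map_smul, map_smul]
end

section
/- Let (A, μ, α, B) be a quadratic Hom-Novikov superalgebra where α is an involution (α² = id) satisfying B(α(x), y) = B(x, α(y)). Then (A, α∘μ, B) is a quadratic Novikov superalgebra; in particular B is invariant for the product x * y = α(xy): B(x*y, z) = B(x, y*z). -/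
theorem stmt8
    (𝕜 A : Type*) [Field 𝕜] [AddCommGroup A] [Module 𝕜 A]
    (G : ZMod 2 → Submodule 𝕜 A) (hG : DirectSum.IsInternal G)
    (mul : A →ₗ[𝕜] A →ₗ[𝕜] A) (α : A →ₗ[𝕜] A)
    (hmul_even : ∀ i j : ZMod 2, ∀ x ∈ G i, ∀ y ∈ G j, mul x y ∈ G (i + j))
    (hα_even : ∀ i : ZMod 2, ∀ x ∈ G i, α x ∈ G i)
    (hα_mul : ∀ x y : A, α (mul x y) = mul (α x) (α y))
    (hls : ∀ i j k : ZMod 2, ∀ x ∈ G i, ∀ y ∈ G j, ∀ z ∈ G k,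
      mul (mul x y) (α z) - mul (α x) (mul y z)
        = ((-1 : 𝕜) ^ (i.val * j.val)) • (mul (mul y x) (α z) - mul (α y) (mul x z)))
    (hrn : ∀ i j k : ZMod 2, ∀ x ∈ G i, ∀ y ∈ G j, ∀ z ∈ G k,
      mul (mul x y) (α z) = ((-1 : 𝕜) ^ (j.val * k.val)) • mul (mul x z) (α y))
    (B : A →ₗ[𝕜] A →ₗ[𝕜] 𝕜)
    (hB_even : ∀ i j : ZMod 2, i ≠ j → ∀ x ∈ G i, ∀ y ∈ G j, B x y = 0)
    (hB_sym : ∀ i j : ZMod 2, ∀ x ∈ G i, ∀ y ∈ G j,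
      B x y = ((-1 : 𝕜) ^ (i.val * j.val)) * B y x)
    (hB_nd : ∀ x : A, (∀ y : A, B x y = 0) → x = 0)
    (hB_inv : ∀ x y z : A, B (α x) (mul y z) = B (mul x y) (α z))
    (hinv : ∀ x : A, α (α x) = x)
    (hBα : ∀ x y : A, B (α x) y = B x (α y)) :
    (∀ i j : ZMod 2, ∀ x ∈ G i, ∀ y ∈ G j, amul α mul x y ∈ G (i + j)) ∧
    (∀ i j k : ZMod 2, ∀ x ∈ G i, ∀ y ∈ G j, ∀ z ∈ G k,
      amul α mul (amul α mul x y) z - amul α mul x (amul α mul y z)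
        = ((-1 : 𝕜) ^ (i.val * j.val)) •
            (amul α mul (amul α mul y x) z - amul α mul y (amul α mul x z))) ∧
    (∀ i j k : ZMod 2, ∀ x ∈ G i, ∀ y ∈ G j, ∀ z ∈ G k,
      amul α mul (amul α mul x y) z
        = ((-1 : 𝕜) ^ (j.val * k.val)) • amul α mul (amul α mul x z) y) ∧
    (∀ x y z : A, B (amul α mul x y) z = B x (amul α mul y z)) := by
  have key1 : ∀ x y z : A, amul α mul (amul α mul x y) z = mul (mul x y) (α z) := by
    intro x y z
    simp only [amul, hα_mul, hinv]
  have key2 : ∀ x y z : A, amul α mul x (amul α mul y z) = mul (α x) (mul y z) := by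
    intro x y z
    simp only [amul, hα_mul, hinv]
  refine ⟨?_, ?_, ?_, ?_⟩
  · intro i j x hx y hy
    exact hα_even _ _ (hmul_even i j x hx y hy)
  · intro i j k x hx y hy z hz
    rw [key1, key2, key1, key2]
    exact hls i j k x hx y hy z hz
  · intro i j k x hx y hy z hz
    rw [key1, key1]
    exact hrn i j k x hx y hy z hz
  · intro x y z
    show B (α (mul x y)) z = B x (α (mul y z))
    rw [hBα, ← hB_inv, hBα]
end

section
/- Let (A, μ, α, B) be a quadratic Hom-Novikov superalgebra where α is an automorphism satisfying B(α(x), y) = B(x, α(y)). Then (A, α∘μ, α², B_{α²}) is a quadratic Hom-Novikov superalgebra, where B_{α²}(x,y) = B(α²(x), y). -/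
theorem stmt9
    (𝕜 A : Type*) [Field 𝕜] [AddCommGroup A] [Module 𝕜 A]
    (G : ZMod 2 → Submodule 𝕜 A) (hG : DirectSum.IsInternal G)
    (mul : A →ₗ[𝕜] A →ₗ[𝕜] A) (α : A →ₗ[𝕜] A)
    (hmul_even : ∀ i j : ZMod 2, ∀ x ∈ G i, ∀ y ∈ G j, mul x y ∈ G (i + j))
    (hα_even : ∀ i : ZMod 2, ∀ x ∈ G i, α x ∈ G i)
    (hα_mul : ∀ x y : A, α (mul x y) = mul (α x) (α y))
    (hls : ∀ i j k : ZMod 2, ∀ x ∈ G i, ∀ y ∈ G j, ∀ z ∈ G k,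
      mul (mul x y) (α z) - mul (α x) (mul y z)
        = ((-1 : 𝕜) ^ (i.val * j.val)) • (mul (mul y x) (α z) - mul (α y) (mul x z)))
    (hrn : ∀ i j k : ZMod 2, ∀ x ∈ G i, ∀ y ∈ G j, ∀ z ∈ G k,
      mul (mul x y) (α z) = ((-1 : 𝕜) ^ (j.val * k.val)) • mul (mul x z) (α y))
    (B : A →ₗ[𝕜] A →ₗ[𝕜] 𝕜)
    (hB_even : ∀ i j : ZMod 2, i ≠ j → ∀ x ∈ G i, ∀ y ∈ G j, B x y = 0)
    (hB_sym : ∀ i j : ZMod 2, ∀ x ∈ G i, ∀ y ∈ G j,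
      B x y = ((-1 : 𝕜) ^ (i.val * j.val)) * B y x)
    (hB_nd : ∀ x : A, (∀ y : A, B x y = 0) → x = 0)
    (hB_inv : ∀ x y z : A, B (α x) (mul y z) = B (mul x y) (α z))
    (hα_bij : Function.Bijective α)
    (hBα : ∀ x y : A, B (α x) y = B x (α y)) :
    (∀ i j : ZMod 2, ∀ x ∈ G i, ∀ y ∈ G j, amul α mul x y ∈ G (i + j)) ∧
    (∀ x y : A, α (α (amul α mul x y)) = amul α mul (α (α x)) (α (α y))) ∧
    (∀ i j k : ZMod 2, ∀ x ∈ G i, ∀ y ∈ G j, ∀ z ∈ G k,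
      amul α mul (amul α mul x y) (α (α z)) - amul α mul (α (α x)) (amul α mul y z)
        = ((-1 : 𝕜) ^ (i.val * j.val)) •
            (amul α mul (amul α mul y x) (α (α z))
              - amul α mul (α (α y)) (amul α mul x z))) ∧
    (∀ i j k : ZMod 2, ∀ x ∈ G i, ∀ y ∈ G j, ∀ z ∈ G k,
      amul α mul (amul α mul x y) (α (α z))
        = ((-1 : 𝕜) ^ (j.val * k.val)) • amul α mul (amul α mul x z) (α (α y))) ∧
    (∀ i j : ZMod 2, ∀ x ∈ G i, ∀ y ∈ G j,
      B (α (α x)) y = ((-1 : 𝕜) ^ (i.val * j.val)) * B (α (α y)) x) ∧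
    (∀ x : A, (∀ y : A, B (α (α x)) y = 0) → x = 0) ∧
    (∀ i j : ZMod 2, i ≠ j → ∀ x ∈ G i, ∀ y ∈ G j, B (α (α x)) y = 0) ∧
    (∀ x y z : A,
      B (α (α (α (α x)))) (amul α mul y z)
        = B (α (α (amul α mul x y))) (α (α z))) := by
  refine ⟨?_, ?_, ?_, ?_, ?_, ?_, ?_, ?_⟩
  · intro i j x hx y hy
    exact hα_even _ _ (hmul_even i j x hx y hy)
  · intro x y
    simp only [amul, hα_mul]
  · intro i j k x hx y hy z hz
    have h := hls i j k x hx y hy z hz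
    simp only [amul, ← hα_mul, ← map_sub, ← map_smul]
    exact congrArg _ (congrArg _ h)
  · intro i j k x hx y hy z hz
    have h := hrn i j k x hx y hy z hz
    simp only [amul, ← hα_mul]
    rw [h, map_smul, map_smul]
  · intro i j x hx y hy
    calc B (α (α x)) y = B y (α (α x)) * ((-1 : 𝕜) ^ (i.val * j.val)) := by
          rw [hB_sym i j _ (hα_even _ _ (hα_even _ _ hx)) y hy]
          ring
      _ = ((-1 : 𝕜) ^ (i.val * j.val)) * B (α (α y)) x := by
          rw [← hBα, ← hBα]; ring
  · intro x hx
    have h0 : α (α x) = 0 := hB_nd _ hx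
    exact hα_bij.1 (hα_bij.1 (by simpa using h0))
  · intro i j hij x hx y hy
    exact hB_even i j hij _ (hα_even _ _ (hα_even _ _ hx)) y hy
  · intro x y z
    calc B (α (α (α (α x)))) (amul α mul y z)
        = B (α (α (α (α (α x))))) (mul y z) := (hBα _ _).symm
      _ = B (α (α (α x))) (α (α (mul y z))) := (hBα _ _).trans (hBα _ _)
      _ = B (α (α (α x))) (mul (α (α y)) (α (α z))) := by rw [hα_mul, hα_mul]
      _ = B (mul (α (α x)) (α (α y))) (α (α (α z))) := hB_inv _ _ _
      _ = B (α (α (mul x y))) (α (α (α z))) := by rw [hα_mul, hα_mul]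
      _ = B (α (α (α (mul x y)))) (α (α z)) := by rw [hBα (α (α (mul x y)))]
      _ = B (α (α (amul α mul x y))) (α (α z)) := rfl
end

section
/- Let (A, μ, α, B) be a quadratic Hom-Novikov superalgebra with α an automorphism. Then (A, μ, α) is Hom-associative: α(x)(yz) = (xy)α(z) for all homogeneous x, y, z. -/
/-!
Write `F(a, b, c, d) = B((ab)α(c), α²(d))`. Invariance and supersymmetry of `B`, together with
multiplicativity of `α`, let one move the pair `(a, b)` past `(c, d)`; combined with right
commutativity this rewrites `B(α(a)(bc), α²(d))` as `±F(c, a, b, d)`. Left symmetry then says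
that `F` is supersymmetric in its first two slots, so it is supersymmetric in its first three,
and `B(α(x)(yz) - (xy)α(z), α²(w))` vanishes for homogeneous `w`. Since `α²` is surjective and
`B` is nondegenerate, `α(x)(yz) = (xy)α(z)`.
-/

lemma neg_one_pow_eq_of_mod_two_eq {R : Type*} [Ring R] {m n : ℕ}
    (h : m % 2 = n % 2) : (-1 : R) ^ m = (-1) ^ n := by
  rw [neg_one_pow_eq_pow_mod_two, h, ← neg_one_pow_eq_pow_mod_two]

lemma LinearMap.eq_zero_of_forall_mem_of_iSup_eq_top {R M N ι : Type*} [Semiring R]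
    [AddCommMonoid M] [AddCommMonoid N] [Module R M] [Module R N] {G : ι → Submodule R M}
    (hG : ⨆ i, G i = ⊤) {f : M →ₗ[R] N} (hf : ∀ i, ∀ x ∈ G i, f x = 0) : f = 0 :=
  LinearMap.ker_eq_top.mp <| top_le_iff.mp <| hG ▸ iSup_le fun i x hx => hf i x hx

namespace QuadraticHomNovikov

variable {𝕜 A : Type*} [CommRing 𝕜] [AddCommGroup A] [Module 𝕜 A]
  {G : ZMod 2 → Submodule 𝕜 A} {mul : A →ₗ[𝕜] A →ₗ[𝕜] A} {α : A →ₗ[𝕜] A}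
  {B : A →ₗ[𝕜] A →ₗ[𝕜] 𝕜}

lemma form_swap_pairs
    (hmul_even : ∀ i j : ZMod 2, ∀ x ∈ G i, ∀ y ∈ G j, mul x y ∈ G (i + j))
    (hα_even : ∀ i : ZMod 2, ∀ x ∈ G i, α x ∈ G i)
    (hα_mul : ∀ x y : A, α (mul x y) = mul (α x) (α y))
    (hB_sym : ∀ i j : ZMod 2, ∀ x ∈ G i, ∀ y ∈ G j,
      B x y = ((-1 : 𝕜) ^ (i.val * j.val)) * B y x)
    (hB_inv : ∀ x y z : A, B (α x) (mul y z) = B (mul x y) (α z))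
    {p q r s : ZMod 2} {a b c d : A} (ha : a ∈ G p) (hb : b ∈ G q) (hc : c ∈ G r)
    (hd : d ∈ G s) :
    B (mul (mul a b) (α c)) (α (α d))
      = (-1 : 𝕜) ^ ((p + q).val * (r + s).val) * B (mul (mul c d) (α a)) (α (α b)) := by
  rw [← hB_inv, ← hα_mul,
    hB_sym _ _ _ (hα_even _ _ (hmul_even _ _ a ha b hb)) _
      (hα_even _ _ (hmul_even _ _ c hc d hd)),
    hα_mul a b, hB_inv]

lemma form_assoc_eq_cycle
    (hmul_even : ∀ i j : ZMod 2, ∀ x ∈ G i, ∀ y ∈ G j, mul x y ∈ G (i + j))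
    (hα_even : ∀ i : ZMod 2, ∀ x ∈ G i, α x ∈ G i)
    (hα_mul : ∀ x y : A, α (mul x y) = mul (α x) (α y))
    (hrn : ∀ i j k : ZMod 2, ∀ x ∈ G i, ∀ y ∈ G j, ∀ z ∈ G k,
      mul (mul x y) (α z) = ((-1 : 𝕜) ^ (j.val * k.val)) • mul (mul x z) (α y))
    (hB_sym : ∀ i j : ZMod 2, ∀ x ∈ G i, ∀ y ∈ G j,
      B x y = ((-1 : 𝕜) ^ (i.val * j.val)) * B y x)
    (hB_inv : ∀ x y z : A, B (α x) (mul y z) = B (mul x y) (α z))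
    {p q r s : ZMod 2} {a b c d : A} (ha : a ∈ G p) (hb : b ∈ G q) (hc : c ∈ G r)
    (hd : d ∈ G s) :
    B (mul (α a) (mul b c)) (α (α d))
      = (-1 : 𝕜) ^ (r.val * (p + q).val) * B (mul (mul c a) (α b)) (α (α d)) := by
  have parity : ∀ p q r s : ZMod 2,
      (r.val * s.val + p.val * (q + s + r).val + (q + s).val * (r + p).val) % 2
        = (r.val * (p + q).val) % 2 := by decide
  rw [← hB_inv, hrn q r s b hb c hc d hd, map_smul, smul_eq_mul,
    hB_sym _ _ _ (hα_even _ _ (hα_even _ _ ha)) _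
      (hmul_even _ _ _ (hmul_even _ _ b hb d hd) _ (hα_even _ _ hc)),
    form_swap_pairs hmul_even hα_even hα_mul hB_sym hB_inv hb hd hc ha,
    ← mul_assoc, ← mul_assoc, ← pow_add, ← pow_add,
    neg_one_pow_eq_of_mod_two_eq (parity p q r s)]

lemma form_swap_left
    (hmul_even : ∀ i j : ZMod 2, ∀ x ∈ G i, ∀ y ∈ G j, mul x y ∈ G (i + j))
    (hα_even : ∀ i : ZMod 2, ∀ x ∈ G i, α x ∈ G i)
    (hα_mul : ∀ x y : A, α (mul x y) = mul (α x) (α y))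
    (hls : ∀ i j k : ZMod 2, ∀ x ∈ G i, ∀ y ∈ G j, ∀ z ∈ G k,
      mul (mul x y) (α z) - mul (α x) (mul y z)
        = ((-1 : 𝕜) ^ (i.val * j.val)) • (mul (mul y x) (α z) - mul (α y) (mul x z)))
    (hrn : ∀ i j k : ZMod 2, ∀ x ∈ G i, ∀ y ∈ G j, ∀ z ∈ G k,
      mul (mul x y) (α z) = ((-1 : 𝕜) ^ (j.val * k.val)) • mul (mul x z) (α y))
    (hB_sym : ∀ i j : ZMod 2, ∀ x ∈ G i, ∀ y ∈ G j,
      B x y = ((-1 : 𝕜) ^ (i.val * j.val)) * B y x)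
    (hB_inv : ∀ x y z : A, B (α x) (mul y z) = B (mul x y) (α z))
    {p q r s : ZMod 2} {a b c d : A} (ha : a ∈ G p) (hb : b ∈ G q) (hc : c ∈ G r)
    (hd : d ∈ G s) :
    B (mul (mul a b) (α c)) (α (α d))
      = (-1 : 𝕜) ^ (p.val * q.val) * B (mul (mul b a) (α c)) (α (α d)) := by
  have left_symm := congrArg (B · (α (α d))) (hls p q r a ha b hb c hc)
  simp only [map_sub, map_smul, LinearMap.sub_apply, LinearMap.smul_apply, smul_eq_mul]
    at left_symm
  have cycle_ab := form_assoc_eq_cycle hmul_even hα_even hα_mul hrn hB_sym hB_inv ha hb hc hd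
  have cycle_ba := form_assoc_eq_cycle hmul_even hα_even hα_mul hrn hB_sym hB_inv hb ha hc hd
  have right_comm := congrArg (B · (α (α d))) (hrn r p q c hc a ha b hb)
  simp only [map_smul, LinearMap.smul_apply, smul_eq_mul] at right_comm
  rw [add_comm q p] at cycle_ba
  linear_combination left_symm + cycle_ab - (-1 : 𝕜) ^ (p.val * q.val) * cycle_ba
    + (-1 : 𝕜) ^ (r.val * (p + q).val) * right_comm

lemma form_assoc_eq
    (hmul_even : ∀ i j : ZMod 2, ∀ x ∈ G i, ∀ y ∈ G j, mul x y ∈ G (i + j))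
    (hα_even : ∀ i : ZMod 2, ∀ x ∈ G i, α x ∈ G i)
    (hα_mul : ∀ x y : A, α (mul x y) = mul (α x) (α y))
    (hls : ∀ i j k : ZMod 2, ∀ x ∈ G i, ∀ y ∈ G j, ∀ z ∈ G k,
      mul (mul x y) (α z) - mul (α x) (mul y z)
        = ((-1 : 𝕜) ^ (i.val * j.val)) • (mul (mul y x) (α z) - mul (α y) (mul x z)))
    (hrn : ∀ i j k : ZMod 2, ∀ x ∈ G i, ∀ y ∈ G j, ∀ z ∈ G k,
      mul (mul x y) (α z) = ((-1 : 𝕜) ^ (j.val * k.val)) • mul (mul x z) (α y))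
    (hB_sym : ∀ i j : ZMod 2, ∀ x ∈ G i, ∀ y ∈ G j,
      B x y = ((-1 : 𝕜) ^ (i.val * j.val)) * B y x)
    (hB_inv : ∀ x y z : A, B (α x) (mul y z) = B (mul x y) (α z))
    {i j k l : ZMod 2} {x y z w : A} (hx : x ∈ G i) (hy : y ∈ G j) (hz : z ∈ G k)
    (hw : w ∈ G l) :
    B (mul (α x) (mul y z)) (α (α w)) = B (mul (mul x y) (α z)) (α (α w)) := by
  have parity : ∀ i j k : ZMod 2,
      (k.val * (i + j).val + k.val * i.val + k.val * j.val) % 2 = 0 % 2 := by decide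
  calc B (mul (α x) (mul y z)) (α (α w))
      = (-1 : 𝕜) ^ (k.val * (i + j).val) * B (mul (mul z x) (α y)) (α (α w)) :=
        form_assoc_eq_cycle hmul_even hα_even hα_mul hrn hB_sym hB_inv hx hy hz hw
    _ = (-1 : 𝕜) ^ (k.val * (i + j).val) *
          ((-1 : 𝕜) ^ (k.val * i.val) * B (mul (mul x z) (α y)) (α (α w))) := by
        rw [form_swap_left hmul_even hα_even hα_mul hls hrn hB_sym hB_inv hz hx hy hw]
    _ = (-1 : 𝕜) ^ (k.val * (i + j).val) * ((-1 : 𝕜) ^ (k.val * i.val) *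
          ((-1 : 𝕜) ^ (k.val * j.val) * B (mul (mul x y) (α z)) (α (α w)))) := by
        rw [hrn i k j x hx z hz y hy, map_smul, LinearMap.smul_apply, smul_eq_mul]
    _ = B (mul (mul x y) (α z)) (α (α w)) := by
        rw [← mul_assoc, ← mul_assoc, ← pow_add, ← pow_add,
          neg_one_pow_eq_of_mod_two_eq (parity i j k), pow_zero, one_mul]

lemma eq_of_form_apply_alpha_sq_eq (hG : ⨆ l, G l = ⊤)
    (hB_nd : ∀ x : A, (∀ y : A, B x y = 0) → x = 0) (hα : Function.Surjective α) {u v : A}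
    (h : ∀ l, ∀ w ∈ G l, B u (α (α w)) = B v (α (α w))) : u = v := by
  have vanish : B (u - v) ∘ₗ α ∘ₗ α = 0 :=
    LinearMap.eq_zero_of_forall_mem_of_iSup_eq_top hG fun l w hw => by
      simp [h l w hw]
  refine sub_eq_zero.mp (hB_nd _ fun y => ?_)
  obtain ⟨w, rfl⟩ := (hα.comp hα) y
  exact LinearMap.congr_fun vanish w

end QuadraticHomNovikov

open QuadraticHomNovikov in
theorem stmt10_general
    (𝕜 A : Type*) [Field 𝕜] [AddCommGroup A] [Module 𝕜 A]
    (G : ZMod 2 → Submodule 𝕜 A) (hG : DirectSum.IsInternal G)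
    (mul : A →ₗ[𝕜] A →ₗ[𝕜] A) (α : A →ₗ[𝕜] A)
    (hmul_even : ∀ i j : ZMod 2, ∀ x ∈ G i, ∀ y ∈ G j, mul x y ∈ G (i + j))
    (hα_even : ∀ i : ZMod 2, ∀ x ∈ G i, α x ∈ G i)
    (hα_mul : ∀ x y : A, α (mul x y) = mul (α x) (α y))
    (hls : ∀ i j k : ZMod 2, ∀ x ∈ G i, ∀ y ∈ G j, ∀ z ∈ G k,
      mul (mul x y) (α z) - mul (α x) (mul y z)
        = ((-1 : 𝕜) ^ (i.val * j.val)) • (mul (mul y x) (α z) - mul (α y) (mul x z)))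
    (hrn : ∀ i j k : ZMod 2, ∀ x ∈ G i, ∀ y ∈ G j, ∀ z ∈ G k,
      mul (mul x y) (α z) = ((-1 : 𝕜) ^ (j.val * k.val)) • mul (mul x z) (α y))
    (B : A →ₗ[𝕜] A →ₗ[𝕜] 𝕜)
    (hB_sym : ∀ i j : ZMod 2, ∀ x ∈ G i, ∀ y ∈ G j,
      B x y = ((-1 : 𝕜) ^ (i.val * j.val)) * B y x)
    (hB_nd : ∀ x : A, (∀ y : A, B x y = 0) → x = 0)
    (hB_inv : ∀ x y z : A, B (α x) (mul y z) = B (mul x y) (α z))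
    (hα_bij : Function.Bijective α) :
    ∀ i j k : ZMod 2, ∀ x ∈ G i, ∀ y ∈ G j, ∀ z ∈ G k,
      mul (α x) (mul y z) = mul (mul x y) (α z) := by
  intro i j k x hx y hy z hz
  exact eq_of_form_apply_alpha_sq_eq hG.submodule_iSup_eq_top hB_nd hα_bij.2 fun l w hw =>
    form_assoc_eq hmul_even hα_even hα_mul hls hrn hB_sym hB_inv hx hy hz hw

theorem stmt10
    (𝕜 A : Type*) [Field 𝕜] [AddCommGroup A] [Module 𝕜 A]
    (G : ZMod 2 → Submodule 𝕜 A) (hG : DirectSum.IsInternal G)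
    (mul : A →ₗ[𝕜] A →ₗ[𝕜] A) (α : A →ₗ[𝕜] A)
    (hmul_even : ∀ i j : ZMod 2, ∀ x ∈ G i, ∀ y ∈ G j, mul x y ∈ G (i + j))
    (hα_even : ∀ i : ZMod 2, ∀ x ∈ G i, α x ∈ G i)
    (hα_mul : ∀ x y : A, α (mul x y) = mul (α x) (α y))
    (hls : ∀ i j k : ZMod 2, ∀ x ∈ G i, ∀ y ∈ G j, ∀ z ∈ G k,
      mul (mul x y) (α z) - mul (α x) (mul y z)
        = ((-1 : 𝕜) ^ (i.val * j.val)) • (mul (mul y x) (α z) - mul (α y) (mul x z)))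
    (hrn : ∀ i j k : ZMod 2, ∀ x ∈ G i, ∀ y ∈ G j, ∀ z ∈ G k,
      mul (mul x y) (α z) = ((-1 : 𝕜) ^ (j.val * k.val)) • mul (mul x z) (α y))
    (B : A →ₗ[𝕜] A →ₗ[𝕜] 𝕜)
    (hB_even : ∀ i j : ZMod 2, i ≠ j → ∀ x ∈ G i, ∀ y ∈ G j, B x y = 0)
    (hB_sym : ∀ i j : ZMod 2, ∀ x ∈ G i, ∀ y ∈ G j,
      B x y = ((-1 : 𝕜) ^ (i.val * j.val)) * B y x)
    (hB_nd : ∀ x : A, (∀ y : A, B x y = 0) → x = 0)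
    (hB_inv : ∀ x y z : A, B (α x) (mul y z) = B (mul x y) (α z))
    (hα_bij : Function.Bijective α) :
    ∀ i j k : ZMod 2, ∀ x ∈ G i, ∀ y ∈ G j, ∀ z ∈ G k,
      mul (α x) (mul y z) = mul (mul x y) (α z) :=
  stmt10_general 𝕜 A G hG mul α hmul_even hα_even hα_mul hls hrn B hB_sym hB_nd hB_inv hα_bij
end
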